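/- The (promise-free) GHZ game is strongly completable: for every permutation σ of {1,2,3}, the alternating statement ∀x_{σ(1)}∈{0,1} ∃y_{σ(1)}∈{0,1} ∀x_{σ(2)}∈{0,1} ∃y_{σ(2)}∈{0,1} ∀x_{σ(3)}∈{0,1} ∃y_{σ(3)}∈{0,1} : ((x₁,x₂,x₃),(y₁,y₂,y₃)) ∈ g_GHZ holds. -/
import Mathlib


/-- The alternating ∀∃-statement: given a list of (remaining) player indices and
partially-built input/output assignments, the adversary picks the next player's input and
we must pick that player's output, so that at the end the move is valid for the game `g`. -/
def altGo {S : Type*} {m : ℕ} (g : (Fin m → S) → (Fin m → S) → Prop) :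
    List (Fin m) → (Fin m → S) → (Fin m → S) → Prop
  | [], x, y => g x y
  | i :: rest, x, y =>
      ∀ xi : S, ∃ yi : S,
        altGo g rest (Function.update x i xi) (Function.update y i yi)

/-- The (promise-free) GHZ game on inputs `x` and outputs `y`: if `x 0 ⊕ x 1 ⊕ x 2 = 0`
then `y 0 ⊕ y 1 ⊕ y 2 = x 0 ∨ x 1 ∨ x 2`. -/
def gGHZ (x y : Fin 3 → Bool) : Prop :=
  Bool.xor (x 0) (Bool.xor (x 1) (x 2)) = false →
    Bool.xor (y 0) (Bool.xor (y 1) (y 2)) = (x 0 || x 1 || x 2)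

lemma ghz_key (i j k : Fin 3) (hij : i ≠ j) (hik : i ≠ k) (hjk : j ≠ k)
    (x0 y0 : Fin 3 → Bool) : altGo gGHZ [i, j, k] x0 y0 := by
  fin_cases i <;> fin_cases j <;> fin_cases k <;> simp_all <;>
  · simp only [altGo]
    intro xa
    exact ⟨false, fun xb => ⟨false, fun xc => ⟨xa || xb || xc, by
      cases xa <;> cases xb <;> cases xc <;> simp [gGHZ, Function.update]⟩⟩⟩

/-- **The (promise-free) GHZ game is strongly completable**: for every permutation `σ` of
the three players, the alternating statement
`∀ x_{σ(1)} ∃ y_{σ(1)} ∀ x_{σ(2)} ∃ y_{σ(2)} ∀ x_{σ(3)} ∃ y_{σ(3)} :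
((x₁,x₂,x₃),(y₁,y₂,y₃)) ∈ g_GHZ` holds. -/
theorem ghz_strongly_completable (σ : Equiv.Perm (Fin 3)) (x0 y0 : Fin 3 → Bool) :
    altGo gGHZ (List.ofFn ⇑σ) x0 y0 := by
  have h : List.ofFn ⇑σ = [σ 0, σ 1, σ 2] := by
    simp [List.ofFn_succ]
  rw [h]
  exact ghz_key _ _ _ (σ.injective.ne (by decide)) (σ.injective.ne (by decide))
    (σ.injective.ne (by decide)) x0 y0
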